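/- arXiv:1303.5467 — 4 statements merged into one kernel-verified Lean document; each statement's English description precedes it below -/
import Mathlib

section
/- Let B be a Banach space, D a dense subspace of B which is itself a Banach space with norm ‖·‖_D ≥ ‖·‖_B, and let M be a bounded convex subset of the dual B* with sup_{μ∈M} ‖μ‖_{B*} ≤ K, closed in the norm topologies of both B* and D*. Suppose for each continuous curve ξ : [0,T] → M (in the D* norm, with ξ_0 = μ) we are given a backward propagator U^{t,s}[ξ] of bounded linear operators on B, generated by operators A[t,ξ] : D → B, satisfying: (i) ‖A[t,ξ] − A[t,η]‖_{D→B} ≤ c₁ sup_{t∈[0,T]} ‖ξ_t − η_t‖_{D*} and ‖A[t,ξ]‖_{D→B} ≤ c₁; (ii) ‖U^{t,s}[ξ]‖_{D→D} ≤ c₂ and ‖U^{t,s}[ξ]‖_{B→B} ≤ c₃; and the dual propagators preserve M. Then for any two curves ξ¹, ξ² in C_μ([0,T], M(D*)) and any t ∈ [0,T], ‖(Ũ^{t,0}[ξ¹] − Ũ^{t,0}[ξ²])μ‖_{D*} ≤ c₁ c₂ c₃ t K · sup_{s∈[0,T]} ‖ξ¹_s − ξ²_s‖_{D*}. -/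
set_option autoImplicit false

open MeasureTheory Set NormedSpace

noncomputable section

/-- The embedding of `B*` into `D*` induced by the inclusion `ι : D →L[ℝ] B`. -/
def embDual {B D : Type*} [NormedAddCommGroup B] [NormedSpace ℝ B]
    [NormedAddCommGroup D] [NormedSpace ℝ D] (ι : D →L[ℝ] B)
    (ν : StrongDual ℝ B) : StrongDual ℝ D := ν.comp ι

/-- Continuous curves `[0,T] → M ⊂ B*`, continuity in the `D*`-norm. -/
def AdmCurve {B D : Type*} [NormedAddCommGroup B] [NormedSpace ℝ B]
    [NormedAddCommGroup D] [NormedSpace ℝ D] (ι : D →L[ℝ] B)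
    (M : Set (StrongDual ℝ B)) (T : ℝ) (ξ : ℝ → StrongDual ℝ B) : Prop :=
  (∀ t ∈ Icc (0:ℝ) T, ξ t ∈ M) ∧
  ContinuousOn (fun t => embDual ι (ξ t)) (Icc (0:ℝ) T)

/-! The curve `r ↦ U[ξ₁]^{0,r} U[ξ₂]^{r,t} f` runs from `U[ξ₂]^{0,t} f` to `U[ξ₁]^{0,t} f`.
For `f ∈ D` its derivative is `U[ξ₁]^{0,r} (A[r,ξ₁] - A[r,ξ₂]) U[ξ₂]^{r,t} f`, of norm at most
`c₃ · c₁ sup ‖ξ₁ - ξ₂‖_{D*} · c₂ ‖f‖_D`, so the mean value inequality and `‖μ‖ ≤ K` give the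
bound in `D*`. Differentiating the product needs only strong continuity of `r ↦ U^{0,r}` and
its uniform bound, not norm-differentiability. -/

open Filter Topology Asymptotics

theorem HasDerivWithinAt.clm_apply_of_bounded
    {E F : Type*} [NormedAddCommGroup E] [NormedSpace ℝ E]
    [NormedAddCommGroup F] [NormedSpace ℝ F]
    {L : ℝ → E →L[ℝ] F} {v : ℝ → E} {w : F} {v' : E} {s : Set ℝ} {x C : ℝ}
    (hL : HasDerivWithinAt (fun r => L r (v x)) w s x) (hv : HasDerivWithinAt v v' s x)
    (hLc : ContinuousWithinAt (fun r => L r v') s x) (hLb : ∀ r ∈ s, ‖L r‖ ≤ C) :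
    HasDerivWithinAt (fun r => L r (v r)) (w + L x v') s x := by
  rw [hasDerivWithinAt_iff_isLittleO] at *
  have hLv : (fun r => L r (v r - v x - (r - x) • v')) =o[𝓝[s] x] fun r => r - x :=
    (IsBigO.of_bound C (eventually_nhdsWithin_of_forall fun r hr =>
      (L r).le_of_opNorm_le (hLb r hr) _)).trans_isLittleO hv
  have hLc' : (fun r => (r - x) • (L r v' - L x v')) =o[𝓝[s] x] fun r => r - x := by
    simpa using (isBigO_refl (fun r => r - x) _).smul_isLittleO
      ((isLittleO_one_iff ℝ).2 (tendsto_sub_nhds_zero_iff.2 hLc))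
  refine ((hL.add hLv).add hLc').congr (fun r => ?_) fun _ => rfl
  simp only [map_sub, map_smul, smul_sub, smul_add]
  abel

theorem norm_sub_le_of_generator_sub_le
    {B D : Type*} [NormedAddCommGroup B] [NormedSpace ℝ B]
    [NormedAddCommGroup D] [NormedSpace ℝ D] {ι : D →L[ℝ] B}
    {V : ℝ → B →L[ℝ] B} {AV AW : ℝ → D →L[ℝ] B} {v : ℝ → B} {x : ℝ → D} {a b c C : ℝ}
    (hab : a ≤ b)
    (hV : ∀ g : D, ∀ r ∈ Icc a b,
      HasDerivWithinAt (fun q => V q (ι g)) (V r (AV r g)) (Icc a b) r)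
    (hv : ∀ r ∈ Icc a b, HasDerivWithinAt v (-(AW r (x r))) (Icc a b) r)
    (hvx : ∀ r ∈ Icc a b, v r = ι (x r))
    (hVc : ∀ y, ContinuousOn (fun q => V q y) (Icc a b))
    (hVb : ∀ q ∈ Icc a b, ‖V q‖ ≤ c)
    (hA : ∀ r ∈ Icc a b, ‖(AV r - AW r) (x r)‖ ≤ C) :
    ‖V b (v b) - V a (v a)‖ ≤ c * C * (b - a) := by
  have hderiv : ∀ r ∈ Icc a b, HasDerivWithinAt (fun q => V q (v q))
      (V r ((AV r - AW r) (x r))) (Icc a b) r := by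
    intro r hr
    have hVr := hV (x r) r hr
    rw [← hvx r hr] at hVr
    convert hVr.clm_apply_of_bounded (hv r hr) (hVc _ r hr) hVb using 1
    rw [← map_add, sub_apply, sub_eq_add_neg]
  have hbound : ∀ r ∈ Icc a b, ‖V r ((AV r - AW r) (x r))‖ ≤ c * C := fun r hr =>
    (V r).le_of_opNorm_le (hVb r hr) _ |>.trans <|
      mul_le_mul_of_nonneg_left (hA r hr) ((norm_nonneg _).trans (hVb r hr))
  simpa [Real.norm_of_nonneg (sub_nonneg.2 hab)] using
    (convex_Icc a b).norm_image_sub_le_of_norm_hasDerivWithin_le hderiv hbound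
      (left_mem_Icc.2 hab) (right_mem_Icc.2 hab)

theorem stmt0_general
    {B D : Type*} [NormedAddCommGroup B] [NormedSpace ℝ B]
    [NormedAddCommGroup D] [NormedSpace ℝ D]
    (ι : D →L[ℝ] B)
    (T K c₁ c₂ c₃ : ℝ) (hT : 0 < T) (hK : 0 < K)
    (hc₁ : 0 < c₁) (hc₂ : 0 < c₂) (hc₃ : 0 < c₃)
    (M : Set (StrongDual ℝ B))
    (hMbdd : ∀ ν ∈ M, ‖ν‖ ≤ K)
    (μ : StrongDual ℝ B) (hμ : μ ∈ M)
    (A : (ℝ → StrongDual ℝ B) → ℝ → (D →L[ℝ] B))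
    (U : (ℝ → StrongDual ℝ B) → ℝ → ℝ → (B →L[ℝ] B))
    (UD : (ℝ → StrongDual ℝ B) → ℝ → ℝ → (D →L[ℝ] D))
    (hAlip : ∀ ξ η, AdmCurve ι M T ξ → AdmCurve ι M T η → ∀ t ∈ Icc (0:ℝ) T,
      ‖A ξ t - A η t‖ ≤
        c₁ * ⨆ s : Icc (0:ℝ) T, ‖embDual ι (ξ (s:ℝ)) - embDual ι (η (s:ℝ))‖)
    (hUid : ∀ ξ t, U ξ t t = ContinuousLinearMap.id ℝ B)
    (hUDcompat : ∀ ξ t s f, ι (UD ξ t s f) = U ξ t s (ι f))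
    (hUbdd : ∀ ξ, AdmCurve ι M T ξ → ∀ t s, 0 ≤ t → t ≤ s → s ≤ T → ‖U ξ t s‖ ≤ c₃)
    (hUDbdd : ∀ ξ, AdmCurve ι M T ξ → ∀ t s, 0 ≤ t → t ≤ s → s ≤ T → ‖UD ξ t s‖ ≤ c₂)
    (hUcont : ∀ ξ, AdmCurve ι M T ξ → ∀ v : B,
      ContinuousOn (fun q : ℝ × ℝ => U ξ q.1 q.2 v)
        {q : ℝ × ℝ | 0 ≤ q.1 ∧ q.1 ≤ q.2 ∧ q.2 ≤ T})
    (hgen₁ : ∀ ξ, AdmCurve ι M T ξ → ∀ (f : D) (t : ℝ), t ∈ Icc (0:ℝ) T →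
      ∀ s ∈ Icc t T,
      HasDerivWithinAt (fun r => U ξ t r (ι f)) (U ξ t s (A ξ s f)) (Icc t T) s)
    (hgen₂ : ∀ ξ, AdmCurve ι M T ξ → ∀ (f : D) (r : ℝ), r ∈ Icc (0:ℝ) T →
      ∀ s ∈ Icc (0:ℝ) r,
      HasDerivWithinAt (fun q => U ξ q r (ι f)) (-(A ξ s (UD ξ s r f)))
        (Icc (0:ℝ) r) s)
 :
    ∀ ξ₁ ξ₂, AdmCurve ι M T ξ₁ → AdmCurve ι M T ξ₂ → ξ₁ 0 = μ → ξ₂ 0 = μ →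
    ∀ t ∈ Icc (0:ℝ) T,
    ‖embDual ι (μ.comp (U ξ₁ 0 t)) - embDual ι (μ.comp (U ξ₂ 0 t))‖ ≤
      c₁ * c₂ * c₃ * t * K *
        ⨆ s : Icc (0:ℝ) T, ‖embDual ι (ξ₁ (s:ℝ)) - embDual ι (ξ₂ (s:ℝ))‖
 := by
  intro ξ₁ ξ₂ h₁ h₂ _ _ t ⟨ht0, htT⟩
  set S := ⨆ s : Icc (0:ℝ) T, ‖embDual ι (ξ₁ (s:ℝ)) - embDual ι (ξ₂ (s:ℝ))‖
  have hS : 0 ≤ S := Real.iSup_nonneg fun _ => norm_nonneg _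
  have hIcc : Icc 0 t ⊆ Icc 0 T := Icc_subset_Icc le_rfl htT
  have hVc : ∀ y, ContinuousOn (fun r => U ξ₁ 0 r y) (Icc 0 t) := fun y =>
    (hUcont ξ₁ h₁ y).comp (continuous_const.prodMk continuous_id).continuousOn
      fun r hr => ⟨le_rfl, hr.1, hr.2.trans htT⟩
  have hA : ∀ f, ∀ r ∈ Icc 0 t, ‖(A ξ₁ r - A ξ₂ r) (UD ξ₂ r t f)‖ ≤ c₁ * S * (c₂ * ‖f‖) :=
    fun f r hr => ((A ξ₁ r - A ξ₂ r).le_of_opNorm_le (hAlip ξ₁ ξ₂ h₁ h₂ r (hIcc hr)) _).trans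
      (mul_le_mul_of_nonneg_left
        ((UD ξ₂ r t).le_of_opNorm_le (hUDbdd ξ₂ h₂ r t hr.1 hr.2 htT) f) (by positivity))
  refine ContinuousLinearMap.opNorm_le_bound _
    (mul_nonneg (mul_nonneg (mul_nonneg (by positivity) ht0) hK.le) hS) fun f => ?_
  have hdiff : ‖U ξ₁ 0 t (ι f) - U ξ₂ 0 t (ι f)‖ ≤ c₃ * (c₁ * S * (c₂ * ‖f‖)) * t := by
    simpa [hUid] using norm_sub_le_of_generator_sub_le ht0
      (fun g r hr => (hgen₁ ξ₁ h₁ g 0 ⟨le_rfl, hT.le⟩ r (hIcc hr)).mono hIcc)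
      (hgen₂ ξ₂ h₂ f t ⟨ht0, htT⟩) (fun r _ => (hUDcompat ξ₂ r t f).symm) hVc
      (fun r hr => hUbdd ξ₁ h₁ 0 r le_rfl hr.1 (hr.2.trans htT)) (hA f)
  calc ‖(embDual ι (μ.comp (U ξ₁ 0 t)) - embDual ι (μ.comp (U ξ₂ 0 t))) f‖
      = ‖μ (U ξ₁ 0 t (ι f) - U ξ₂ 0 t (ι f))‖ := by simp [embDual]
    _ ≤ K * (c₃ * (c₁ * S * (c₂ * ‖f‖)) * t) :=
      (μ.le_of_opNorm_le (hMbdd μ hμ) _).trans (mul_le_mul_of_nonneg_left hdiff hK.le)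
    _ = c₁ * c₂ * c₃ * t * K * S * ‖f‖ := by ring

/-- the basic perturbation estimate for dual propagators:
`‖(Ũ^{t,0}[ξ¹] − Ũ^{t,0}[ξ²])μ‖_{D*} ≤ c₁c₂c₃ t K · sup_{s∈[0,T]} ‖ξ¹_s − ξ²_s‖_{D*}`. -/
theorem stmt0
    {B D : Type*} [NormedAddCommGroup B] [NormedSpace ℝ B] [CompleteSpace B]
    [NormedAddCommGroup D] [NormedSpace ℝ D] [CompleteSpace D]
    (ι : D →L[ℝ] B) (hιdense : DenseRange ι) (hιnorm : ∀ f : D, ‖ι f‖ ≤ ‖f‖)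
    (T K c₁ c₂ c₃ : ℝ) (hT : 0 < T) (hK : 0 < K)
    (hc₁ : 0 < c₁) (hc₂ : 0 < c₂) (hc₃ : 0 < c₃)
    (M : Set (StrongDual ℝ B)) (hMne : M.Nonempty) (hMconv : Convex ℝ M)
    (hMbdd : ∀ ν ∈ M, ‖ν‖ ≤ K) (hMclB : IsClosed M)
    (hMclD : IsClosed (embDual ι '' M))
    (μ : StrongDual ℝ B) (hμ : μ ∈ M)
    (A : (ℝ → StrongDual ℝ B) → ℝ → (D →L[ℝ] B))
    (U : (ℝ → StrongDual ℝ B) → ℝ → ℝ → (B →L[ℝ] B))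
    (UD : (ℝ → StrongDual ℝ B) → ℝ → ℝ → (D →L[ℝ] D))
    (hAbdd : ∀ ξ, AdmCurve ι M T ξ → ∀ t ∈ Icc (0:ℝ) T, ‖A ξ t‖ ≤ c₁)
    (hAlip : ∀ ξ η, AdmCurve ι M T ξ → AdmCurve ι M T η → ∀ t ∈ Icc (0:ℝ) T,
      ‖A ξ t - A η t‖ ≤
        c₁ * ⨆ s : Icc (0:ℝ) T, ‖embDual ι (ξ (s:ℝ)) - embDual ι (η (s:ℝ))‖)
    (hUid : ∀ ξ t, U ξ t t = ContinuousLinearMap.id ℝ B)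
    (hUchain : ∀ ξ t s r, t ≤ s → s ≤ r → (U ξ t s).comp (U ξ s r) = U ξ t r)
    (hUDcompat : ∀ ξ t s f, ι (UD ξ t s f) = U ξ t s (ι f))
    (hUbdd : ∀ ξ, AdmCurve ι M T ξ → ∀ t s, 0 ≤ t → t ≤ s → s ≤ T → ‖U ξ t s‖ ≤ c₃)
    (hUDbdd : ∀ ξ, AdmCurve ι M T ξ → ∀ t s, 0 ≤ t → t ≤ s → s ≤ T → ‖UD ξ t s‖ ≤ c₂)
    (hUcont : ∀ ξ, AdmCurve ι M T ξ → ∀ v : B,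
      ContinuousOn (fun q : ℝ × ℝ => U ξ q.1 q.2 v)
        {q : ℝ × ℝ | 0 ≤ q.1 ∧ q.1 ≤ q.2 ∧ q.2 ≤ T})
    (hgen₁ : ∀ ξ, AdmCurve ι M T ξ → ∀ (f : D) (t : ℝ), t ∈ Icc (0:ℝ) T →
      ∀ s ∈ Icc t T,
      HasDerivWithinAt (fun r => U ξ t r (ι f)) (U ξ t s (A ξ s f)) (Icc t T) s)
    (hgen₂ : ∀ ξ, AdmCurve ι M T ξ → ∀ (f : D) (r : ℝ), r ∈ Icc (0:ℝ) T →
      ∀ s ∈ Icc (0:ℝ) r,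
      HasDerivWithinAt (fun q => U ξ q r (ι f)) (-(A ξ s (UD ξ s r f)))
        (Icc (0:ℝ) r) s)
    (hpres : ∀ ξ, AdmCurve ι M T ξ → ∀ t s, 0 ≤ t → t ≤ s → s ≤ T →
      ∀ ν ∈ M, ν.comp (U ξ t s) ∈ M)
 :
    ∀ ξ₁ ξ₂, AdmCurve ι M T ξ₁ → AdmCurve ι M T ξ₂ → ξ₁ 0 = μ → ξ₂ 0 = μ →
    ∀ t ∈ Icc (0:ℝ) T,
    ‖embDual ι (μ.comp (U ξ₁ 0 t)) - embDual ι (μ.comp (U ξ₂ 0 t))‖ ≤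
      c₁ * c₂ * c₃ * t * K *
        ⨆ s : Icc (0:ℝ) T, ‖embDual ι (ξ₁ (s:ℝ)) - embDual ι (ξ₂ (s:ℝ))‖ :=
  stmt0_general ι T K c₁ c₂ c₃ hT hK hc₁ hc₂ hc₃ M hMbdd μ hμ A U UD hAlip hUid hUDcompat hUbdd
    hUDbdd hUcont hgen₁ hgen₂
end
end

section
/- Under the assumptions of the local well-posedness setup (bounded convex M ⊂ B* with bound K, Lipschitz constant c₁ for the generators, propagator bounds c₂ on D and c₃ on B, dual propagators preserving M), if additionally c₁ c₂ c₃ K T < 1, then the map Φ : C_μ([0,T], M(D*)) → C_μ([0,T], M(D*)) sending a curve ξ to the curve t ↦ Ũ^{t,0}[ξ]μ is a contraction with contraction constant c₁ c₂ c₃ K T < 1, and hence has a unique fixed point; this fixed point is the unique solution of the path-dependent kinetic equation (d/dt)(f, μ_t) = (A[t, {μ_·}]f, μ_t), μ_0 = μ, for all f ∈ D. -/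
set_option autoImplicit false

open MeasureTheory Set NormedSpace

noncomputable section

/-!
Write `Φ ξ` for the curve `t ↦ μ ∘ U^{0,t}[ξ]`. Differentiating `s ↦ U^{0,s}[ξ] U^{s,t}[η] f`
gives Duhamel's formula
`U^{0,t}[ξ] f - U^{0,t}[η] f = ∫₀ᵗ U^{0,s}[ξ] (A[s,ξ] - A[s,η]) U^{s,t}[η] f ds`,
whose integrand is bounded by `c₃ · c₁ ‖ξ - η‖ · c₂ ‖f‖_D`; pairing with `μ` shows that `Φ` is a
`c₁c₂c₃KT`-contraction for the sup-distance in `D*`. The `D*`-continuous curves with values in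
`M` form a closed subset of `C([0,T], D*)`, so Banach's fixed point theorem applies.

A fixed point solves the kinetic equation by differentiating `t ↦ μ (U^{0,t} f)`. Conversely, for a
solution `ξ` the pairing `s ↦ ξ_s (U^{s,t} f)` has zero derivative, so `ξ_t = μ ∘ U^{0,t}`. The
product rules behind both arguments need strong continuity of `s ↦ U^{0,s}` and weak continuity of
`s ↦ ξ_s` on all of `B`; both follow from continuity on the dense subspace `D` and a uniform bound.
-/

open Filter Topology Asymptotics

section Analysis

variable {E F : Type*} [NormedAddCommGroup E] [NormedSpace ℝ E]
  [NormedAddCommGroup F] [NormedSpace ℝ F]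

theorem continuousOn_clm_apply_of_dense {X : Type*} [TopologicalSpace X]
    {Λ : X → E →L[ℝ] F} {S : Set X} {C : ℝ} {s : Set E} (hs : Dense s)
    (hC : ∀ x ∈ S, ‖Λ x‖ ≤ C) (h : ∀ w ∈ s, ContinuousOn (fun x => Λ x w) S) (v : E) :
    ContinuousOn (fun x => Λ x v) S := by
  simp only [continuousOn_iff_continuous_domRestrict, continuous_iff_continuousAt] at h ⊢
  intro x
  have hequi : Equicontinuous fun y : S => (Λ y : E → F) :=
    (LipschitzWith.uniformEquicontinuous (fun y : S => (Λ y : E → F)) C.toNNReal fun y =>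
      (Λ y).lipschitzWith_of_opNorm_le ((hC y y.2).trans (C.le_coe_toNNReal))).equicontinuous
  have hclosed := hequi.isClosed_setOfPred_tendsto (l := 𝓝 x) (Λ x).continuous
  exact hclosed.closure_subset_iff.2 (fun w hw => h w hw x) (hs v)

-- A product rule in which `Λ` is differentiable only pointwise (at `w s`), unlike
-- `HasDerivWithinAt.clm_apply`: a local bound on `‖Λ r‖` and continuity of `Λ · w'` make up for it.
theorem hasDerivWithinAt_clm_apply_of_bounded {Λ : ℝ → E →L[ℝ] F} {w : ℝ → E}
    {S : Set ℝ} {s : ℝ} {w' : E} {d : F} {C : ℝ}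
    (hΛ : HasDerivWithinAt (fun r => Λ r (w s)) d S s) (hw : HasDerivWithinAt w w' S s)
    (hcont : ContinuousWithinAt (fun r => Λ r w') S s) (hC : ∀ᶠ r in 𝓝[S] s, ‖Λ r‖ ≤ C) :
    HasDerivWithinAt (fun r => Λ r (w r)) (d + Λ s w') S s := by
  have hws := hasDerivWithinAt_iff_isLittleO.1 ((Λ s).hasFDerivAt.comp_hasDerivWithinAt s hw)
  rw [hasDerivWithinAt_iff_isLittleO] at hΛ hw ⊢
  have hlin : (fun r => (r - s) • (Λ r w' - Λ s w')) =o[𝓝[S] s] fun r => (r - s) • (1 : ℝ) :=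
    (isBigO_refl _ _).smul_isLittleO
      ((isLittleO_one_iff ℝ).2 (by simpa using hcont.tendsto.sub_const (Λ s w')))
  have hrem : (fun r => (Λ r - Λ s) (w r - w s - (r - s) • w')) =o[𝓝[S] s] fun r => r - s := by
    refine (IsBigO.of_bound (C + ‖Λ s‖) ?_).trans_isLittleO hw
    filter_upwards [hC] with r hr
    refine ((Λ r - Λ s).le_opNorm _).trans (mul_le_mul_of_nonneg_right ?_ (norm_nonneg _))
    exact (norm_sub_le _ _).trans (by linarith)
  refine ((hΛ.add hws).add ((hlin.trans_isBigO (by simp [isBigO_refl])).add hrem)).congr'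
    (Eventually.of_forall fun r => ?_) EventuallyEq.rfl
  simp only [Function.comp_apply, sub_apply, map_sub, map_smul, smul_sub, smul_add]
  abel

end Analysis

section Propagators

variable {B D : Type*} [NormedAddCommGroup B] [NormedSpace ℝ B]
  [NormedAddCommGroup D] [NormedSpace ℝ D] {ι : D →L[ℝ] B}

theorem embDual_injective (hι : DenseRange ι) : Function.Injective (embDual ι) :=
  fun ν₁ ν₂ h => DFunLike.coe_injective <|
    hι.equalizer ν₁.continuous ν₂.continuous (congrArg DFunLike.coe h)

theorem norm_embDual_comp_sub_comp_le (μ : StrongDual ℝ B) {P Q : B →L[ℝ] B} {C : ℝ}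
    (hC : 0 ≤ C) (h : ∀ f, ‖P (ι f) - Q (ι f)‖ ≤ C * ‖f‖) :
    ‖embDual ι (μ.comp P) - embDual ι (μ.comp Q)‖ ≤ ‖μ‖ * C := by
  refine ContinuousLinearMap.opNorm_le_bound _ (by positivity) fun f => ?_
  calc ‖(embDual ι (μ.comp P) - embDual ι (μ.comp Q)) f‖ = ‖μ (P (ι f) - Q (ι f))‖ := by
        simp [embDual]
    _ ≤ ‖μ‖ * (C * ‖f‖) := μ.le_opNorm_of_le (h f)
    _ = ‖μ‖ * C * ‖f‖ := by ring

theorem norm_propagator_sub_le (hι : DenseRange ι) {U₁ U₂ : ℝ → ℝ → B →L[ℝ] B}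
    {A₁ A₂ : ℝ → D →L[ℝ] B} {V₂ : ℝ → ℝ → D →L[ℝ] D} {t a c₂ c₃ : ℝ} (ht : 0 ≤ t)
    (hU₁ : U₁ 0 0 = ContinuousLinearMap.id ℝ B) (hU₂ : U₂ t t = ContinuousLinearMap.id ℝ B)
    (hV₂ : ∀ s g, ι (V₂ s t g) = U₂ s t (ι g))
    (hU₁bdd : ∀ s ∈ Icc 0 t, ‖U₁ 0 s‖ ≤ c₃) (hV₂bdd : ∀ s ∈ Icc 0 t, ‖V₂ s t‖ ≤ c₂)
    (hA : ∀ s ∈ Icc 0 t, ‖A₁ s - A₂ s‖ ≤ a)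
    (hgen₁ : ∀ g, ∀ s ∈ Icc 0 t,
      HasDerivWithinAt (fun r => U₁ 0 r (ι g)) (U₁ 0 s (A₁ s g)) (Icc 0 t) s)
    (hgen₂ : ∀ g, ∀ s ∈ Icc 0 t,
      HasDerivWithinAt (fun r => U₂ r t (ι g)) (-(A₂ s (V₂ s t g))) (Icc 0 t) s)
    (f : D) :
    ‖U₁ 0 t (ι f) - U₂ 0 t (ι f)‖ ≤ c₃ * a * c₂ * t * ‖f‖ := by
  have hcont (v : B) : ContinuousOn (fun r => U₁ 0 r v) (Icc 0 t) := by
    refine continuousOn_clm_apply_of_dense hι hU₁bdd ?_ v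
    rintro _ ⟨g, rfl⟩ s hs
    exact (hgen₁ g s hs).continuousWithinAt
  have hder : ∀ s ∈ Icc 0 t, HasDerivWithinAt (fun r => U₁ 0 r (U₂ r t (ι f)))
      (U₁ 0 s ((A₁ s - A₂ s) (V₂ s t f))) (Icc 0 t) s := by
    intro s hs
    convert hasDerivWithinAt_clm_apply_of_bounded (hV₂ s f ▸ hgen₁ (V₂ s t f) s hs)
      (hgen₂ f s hs) (hcont _ s hs) (eventually_nhdsWithin_of_forall hU₁bdd) using 1
    simp [sub_eq_add_neg]
  have hbound : ∀ s ∈ Icc 0 t, ‖U₁ 0 s ((A₁ s - A₂ s) (V₂ s t f))‖ ≤ c₃ * (a * (c₂ * ‖f‖)) :=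
    fun s hs => (U₁ 0 s).le_of_opNorm_le_of_le (hU₁bdd s hs) <|
      (A₁ s - A₂ s).le_of_opNorm_le_of_le (hA s hs) ((V₂ s t).le_of_opNorm_le (hV₂bdd s hs) f)
  have := (convex_Icc 0 t).norm_image_sub_le_of_norm_hasDerivWithin_le hder hbound
    ⟨le_rfl, ht⟩ ⟨ht, le_rfl⟩
  simp only [hU₁, hU₂, ContinuousLinearMap.id_apply, sub_zero, Real.norm_of_nonneg ht] at this
  linarith

theorem continuousOn_embDual_comp_propagator {U : ℝ → B →L[ℝ] B} {A : ℝ → D →L[ℝ] B}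
    {S : Set ℝ} {c₁ c₃ : ℝ} (hS : Convex ℝ S) (hA : ∀ s ∈ S, ‖A s‖ ≤ c₁) (hU : ∀ s ∈ S, ‖U s‖ ≤ c₃)
    (hgen : ∀ f, ∀ s ∈ S, HasDerivWithinAt (fun r => U r (ι f)) (U s (A s f)) S s)
    (μ : StrongDual ℝ B) : ContinuousOn (fun t => embDual ι (μ.comp (U t))) S := by
  refine (LipschitzOnWith.of_dist_le_mul (K := (‖μ‖ * (c₃ * c₁)).toNNReal)
    fun x hx y hy => ?_).continuousOn
  have hc₃ : 0 ≤ c₃ := (norm_nonneg _).trans (hU x hx)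
  have hc₁ : 0 ≤ c₁ := (norm_nonneg _).trans (hA x hx)
  have hmvt (f : D) : ‖U x (ι f) - U y (ι f)‖ ≤ c₃ * c₁ * dist x y * ‖f‖ := by
    have := hS.norm_image_sub_le_of_norm_hasDerivWithin_le (hgen f)
      (fun s hs => (U s).le_of_opNorm_le_of_le (hU s hs) ((A s).le_of_opNorm_le (hA s hs) f)) hy hx
    rw [dist_eq_norm]
    linarith
  rw [dist_eq_norm, Real.coe_toNNReal _ (by positivity), mul_assoc]
  exact norm_embDual_comp_sub_comp_le μ (by positivity) hmvt

theorem hasDerivWithinAt_of_eqOn_comp_propagator {ξ : ℝ → StrongDual ℝ B} {μ : StrongDual ℝ B}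
    {U : ℝ → B →L[ℝ] B} {A : ℝ → D →L[ℝ] B} {S : Set ℝ}
    (hξ : EqOn ξ (fun t => μ.comp (U t)) S)
    (hgen : ∀ f, ∀ s ∈ S, HasDerivWithinAt (fun r => U r (ι f)) (U s (A s f)) S s)
    (f : D) {t : ℝ} (ht : t ∈ S) :
    HasDerivWithinAt (fun s => ξ s (ι f)) (ξ t (A t f)) S t := by
  rw [hξ ht]
  exact (μ.hasFDerivAt.comp_hasDerivWithinAt t (hgen f t ht)).congr
    (fun s hs => by rw [hξ hs]; rfl) (by rw [hξ ht]; rfl)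

theorem eqOn_comp_propagator_of_hasDerivWithinAt (hι : DenseRange ι) {ξ : ℝ → StrongDual ℝ B}
    {U : ℝ → ℝ → B →L[ℝ] B} {V : ℝ → ℝ → D →L[ℝ] D} {A : ℝ → D →L[ℝ] B} {T K : ℝ}
    (hbdd : ∀ t ∈ Icc 0 T, ‖ξ t‖ ≤ K) (hcont : ContinuousOn (fun t => embDual ι (ξ t)) (Icc 0 T))
    (hUid : ∀ t, U t t = ContinuousLinearMap.id ℝ B) (hV : ∀ s t f, ι (V s t f) = U s t (ι f))
    (hgen : ∀ f, ∀ t ∈ Icc 0 T, ∀ s ∈ Icc 0 t,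
      HasDerivWithinAt (fun q => U q t (ι f)) (-(A s (V s t f))) (Icc 0 t) s)
    (hkin : ∀ f, ∀ t ∈ Icc 0 T,
      HasDerivWithinAt (fun s => ξ s (ι f)) (ξ t (A t f)) (Icc 0 T) t) :
    EqOn ξ (fun t => (ξ 0).comp (U 0 t)) (Icc 0 T) := by
  intro t ht
  have hsub : Icc 0 t ⊆ Icc 0 T := Icc_subset_Icc_right ht.2
  have hweak (v : B) : ContinuousOn (fun r => ξ r v) (Icc 0 T) := by
    refine continuousOn_clm_apply_of_dense hι hbdd ?_ v
    rintro _ ⟨g, rfl⟩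
    exact hcont.clm_apply continuousOn_const
  refine embDual_injective hι (ContinuousLinearMap.ext fun f => ?_)
  have hder : ∀ s ∈ Icc 0 t,
      HasDerivWithinAt (fun r => ξ r (U r t (ι f))) 0 (Icc 0 t) s := by
    intro s hs
    refine (hasDerivWithinAt_clm_apply_of_bounded
      ((hV s t f ▸ hkin (V s t f) s (hsub hs)).mono hsub) (hgen f t ht s hs)
      ((hweak _ s (hsub hs)).mono hsub)
      (eventually_nhdsWithin_of_forall fun r hr => hbdd r (hsub hr))).congr_deriv ?_
    rw [ContinuousLinearMap.map_neg, add_neg_cancel]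
  have := (convex_Icc 0 t).norm_image_sub_le_of_norm_hasDerivWithin_le hder
    (fun _ _ => norm_zero.le) ⟨le_rfl, ht.1⟩ ⟨ht.1, le_rfl⟩
  simpa [hUid, sub_eq_zero, embDual] using this

end Propagators

section Curves

variable {B D : Type*} [NormedAddCommGroup B] [NormedSpace ℝ B]
  [NormedAddCommGroup D] [NormedSpace ℝ D] {ι : D →L[ℝ] B} {M : Set (StrongDual ℝ B)} {T : ℝ}

def supDist (ι : D →L[ℝ] B) (T : ℝ) (ξ η : ℝ → StrongDual ℝ B) : ℝ :=
  ⨆ s : Icc (0:ℝ) T, ‖embDual ι (ξ s) - embDual ι (η s)‖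

theorem supDist_congr {ξ ξ' η η' : ℝ → StrongDual ℝ B} (hξ : EqOn ξ ξ' (Icc 0 T))
    (hη : EqOn η η' (Icc 0 T)) : supDist ι T ξ η = supDist ι T ξ' η' :=
  iSup_congr fun s => by rw [hξ s.2, hη s.2]

theorem norm_sub_le_supDist {ξ η : ℝ → StrongDual ℝ B} (hξ : AdmCurve ι M T ξ)
    (hη : AdmCurve ι M T η) {s : ℝ} (hs : s ∈ Icc 0 T) :
    ‖embDual ι (ξ s) - embDual ι (η s)‖ ≤ supDist ι T ξ η :=
  le_ciSup (isCompact_range (hξ.2.sub hη.2).norm.domRestrict).bddAbove (⟨s, hs⟩ : Icc (0:ℝ) T)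

theorem eqOn_of_supDist_le (hι : DenseRange ι) {ξ η : ℝ → StrongDual ℝ B} {k : ℝ} (hk : k < 1)
    (hξ : AdmCurve ι M T ξ) (hη : AdmCurve ι M T η) (h : supDist ι T ξ η ≤ k * supDist ι T ξ η) :
    EqOn ξ η (Icc 0 T) := by
  have hnonneg : 0 ≤ supDist ι T ξ η := Real.iSup_nonneg fun _ => norm_nonneg _
  have hzero : supDist ι T ξ η ≤ 0 := by nlinarith
  intro s hs
  exact embDual_injective hι <| sub_eq_zero.1 <| norm_le_zero_iff.1 <|
    (norm_sub_le_supDist hξ hη hs).trans hzero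

theorem supDist_comp_propagator_le (hι : DenseRange ι) (hT : 0 ≤ T) {μ : StrongDual ℝ B} {K : ℝ}
    (hμ : ‖μ‖ ≤ K) {U₁ U₂ : ℝ → ℝ → B →L[ℝ] B} {A₁ A₂ : ℝ → D →L[ℝ] B}
    {V₂ : ℝ → ℝ → D →L[ℝ] D} {a c₂ c₃ : ℝ}
    (hU₁ : U₁ 0 0 = ContinuousLinearMap.id ℝ B) (hU₂ : ∀ t, U₂ t t = ContinuousLinearMap.id ℝ B)
    (hV₂ : ∀ s t g, ι (V₂ s t g) = U₂ s t (ι g)) (hU₁bdd : ∀ s ∈ Icc 0 T, ‖U₁ 0 s‖ ≤ c₃)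
    (hV₂bdd : ∀ s t, 0 ≤ s → s ≤ t → t ≤ T → ‖V₂ s t‖ ≤ c₂)
    (hA : ∀ s ∈ Icc 0 T, ‖A₁ s - A₂ s‖ ≤ a)
    (hgen₁ : ∀ g, ∀ s ∈ Icc 0 T,
      HasDerivWithinAt (fun r => U₁ 0 r (ι g)) (U₁ 0 s (A₁ s g)) (Icc 0 T) s)
    (hgen₂ : ∀ g, ∀ t ∈ Icc 0 T, ∀ s ∈ Icc 0 t,
      HasDerivWithinAt (fun r => U₂ r t (ι g)) (-(A₂ s (V₂ s t g))) (Icc 0 t) s) :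
    supDist ι T (fun t => μ.comp (U₁ 0 t)) (fun t => μ.comp (U₂ 0 t)) ≤ K * (c₃ * a * c₂ * T) := by
  have : Nonempty (Icc 0 T) := ⟨⟨0, le_rfl, hT⟩⟩
  have hc₃ : 0 ≤ c₃ := (norm_nonneg _).trans (hU₁bdd 0 ⟨le_rfl, hT⟩)
  have hc₂ : 0 ≤ c₂ := (norm_nonneg _).trans (hV₂bdd 0 0 le_rfl le_rfl hT)
  have ha : 0 ≤ a := (norm_nonneg _).trans (hA 0 ⟨le_rfl, hT⟩)
  have hK : 0 ≤ K := (norm_nonneg μ).trans hμ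
  refine ciSup_le fun ⟨t, ht₀, htT⟩ => ?_
  have hsub : Icc 0 t ⊆ Icc 0 T := Icc_subset_Icc_right htT
  calc _ ≤ ‖μ‖ * (c₃ * a * c₂ * t) :=
        norm_embDual_comp_sub_comp_le μ (by positivity) <| norm_propagator_sub_le hι ht₀
          hU₁ (hU₂ t) (hV₂ · t) (fun s hs => hU₁bdd s (hsub hs))
          (fun s hs => hV₂bdd s t hs.1 hs.2 htT) (fun s hs => hA s (hsub hs))
          (fun g s hs => (hgen₁ g s (hsub hs)).mono hsub) (fun g => hgen₂ g t ⟨ht₀, htT⟩)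
    _ ≤ K * (c₃ * a * c₂ * T) := by gcongr

def AdmCurve.toContinuousMap {ξ : ℝ → StrongDual ℝ B} (hξ : AdmCurve ι M T ξ) :
    C(Icc (0:ℝ) T, StrongDual ℝ D) :=
  ⟨fun s => embDual ι (ξ s), hξ.2.domRestrict⟩

theorem AdmCurve.dist_toContinuousMap {ξ η : ℝ → StrongDual ℝ B} (hξ : AdmCurve ι M T ξ)
    (hη : AdmCurve ι M T η) : dist hξ.toContinuousMap hη.toContinuousMap = supDist ι T ξ η := by
  simp only [ContinuousMap.dist_eq_iSup, dist_eq_norm]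
  rfl

-- The `B*`-valued curve whose restriction to `D` is `γ`, extended constantly outside `[0, T]`.
def liftCurve (ι : D →L[ℝ] B) (hT : 0 ≤ T) (γ : C(Icc (0:ℝ) T, StrongDual ℝ D)) :
    ℝ → StrongDual ℝ B :=
  fun t => Function.invFun (embDual ι) (IccExtend hT γ t)

theorem embDual_liftCurve (hT : 0 ≤ T) {γ : C(Icc (0:ℝ) T, StrongDual ℝ D)}
    (hγ : ∀ s, γ s ∈ embDual ι '' M) (t : ℝ) :
    embDual ι (liftCurve ι hT γ t) = IccExtend hT γ t :=
  let ⟨ν, _, h⟩ := hγ (projIcc 0 T hT t)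
  Function.invFun_eq ⟨ν, h⟩

theorem admCurve_liftCurve (hι : DenseRange ι) (hT : 0 ≤ T) {γ : C(Icc (0:ℝ) T, StrongDual ℝ D)}
    (hγ : ∀ s, γ s ∈ embDual ι '' M) : AdmCurve ι M T (liftCurve ι hT γ) := by
  refine ⟨fun t _ => ?_, ?_⟩
  · obtain ⟨ν, hν, h⟩ := hγ (projIcc 0 T hT t)
    rwa [embDual_injective hι ((embDual_liftCurve hT hγ t).trans h.symm)]
  · simp_rw [embDual_liftCurve hT hγ]
    exact (continuous_IccExtend_iff.2 γ.continuous).continuousOn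

theorem toContinuousMap_liftCurve (hι : DenseRange ι) (hT : 0 ≤ T)
    {γ : C(Icc (0:ℝ) T, StrongDual ℝ D)} (hγ : ∀ s, γ s ∈ embDual ι '' M) :
    (admCurve_liftCurve hι hT hγ).toContinuousMap = γ := by
  ext1 s
  exact (embDual_liftCurve hT hγ s).trans (IccExtend_val hT γ s)

theorem exists_admCurve_eqOn_of_supDist_le (hι : DenseRange ι) (hT : 0 ≤ T)
    (hM : IsClosed (embDual ι '' M)) {ν : StrongDual ℝ B} (hν : ν ∈ M)
    {Φ : (ℝ → StrongDual ℝ B) → ℝ → StrongDual ℝ B} {k : ℝ} (hk₀ : 0 ≤ k) (hk : k < 1)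
    (hΦ : ∀ ξ, AdmCurve ι M T ξ → AdmCurve ι M T (Φ ξ))
    (hcontr : ∀ ξ η, AdmCurve ι M T ξ → AdmCurve ι M T η →
      supDist ι T (Φ ξ) (Φ η) ≤ k * supDist ι T ξ η) :
    ∃ ξ, AdmCurve ι M T ξ ∧ EqOn ξ (Φ ξ) (Icc 0 T) := by
  let X := {γ : C(Icc (0:ℝ) T, StrongDual ℝ D) // ∀ s, γ s ∈ embDual ι '' M}
  have hX : IsClosed {γ : C(Icc (0:ℝ) T, StrongDual ℝ D) | ∀ s, γ s ∈ embDual ι '' M} :=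
    ofPred_forall _ ▸ isClosed_iInter fun s => hM.preimage (continuous_eval_const s)
  have : CompleteSpace X := hX.completeSpace_coe
  have : Nonempty X := ⟨⟨ContinuousMap.const _ (embDual ι ν), fun _ => ⟨ν, hν, rfl⟩⟩⟩
  have hlift (γ : X) := admCurve_liftCurve hι hT γ.2
  let F : X → X := fun γ =>
    ⟨(hΦ _ (hlift γ)).toContinuousMap, fun s => ⟨_, (hΦ _ (hlift γ)).1 s s.2, rfl⟩⟩
  have hF : ContractingWith ⟨k, hk₀⟩ F := by
    refine ⟨hk, LipschitzWith.of_dist_le_mul (α := X) (β := X) fun γ η => ?_⟩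
    calc dist (F γ) (F η) = supDist ι T (Φ (liftCurve ι hT γ.1)) (Φ (liftCurve ι hT η.1)) :=
          AdmCurve.dist_toContinuousMap (hΦ _ (hlift γ)) (hΦ _ (hlift η))
      _ ≤ k * supDist ι T (liftCurve ι hT γ.1) (liftCurve ι hT η.1) :=
          hcontr _ _ (hlift γ) (hlift η)
      _ = k * dist γ η := by
          rw [← AdmCurve.dist_toContinuousMap (hlift γ) (hlift η),
            toContinuousMap_liftCurve hι hT γ.2, toContinuousMap_liftCurve hι hT η.2]
          rfl
  let γ := ContractingWith.fixedPoint F hF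
  refine ⟨_, hlift γ, fun t ht => embDual_injective hι ?_⟩
  have hfix := congrArg (fun γ : X => γ.1 ⟨t, ht⟩) hF.fixedPoint_isFixedPt
  exact ((embDual_liftCurve hT γ.2 t).trans (IccExtend_val hT γ.1 ⟨t, ht⟩)).trans hfix.symm

end Curves

theorem stmt1_general
    {B D : Type*} [NormedAddCommGroup B] [NormedSpace ℝ B]
    [NormedAddCommGroup D] [NormedSpace ℝ D]
    (ι : D →L[ℝ] B) (hιdense : DenseRange ι)
    (T K c₁ c₂ c₃ : ℝ) (hT : 0 < T) (hK : 0 < K)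
    (hc₁ : 0 < c₁) (hc₂ : 0 < c₂) (hc₃ : 0 < c₃)
    (M : Set (StrongDual ℝ B)) (hMbdd : ∀ ν ∈ M, ‖ν‖ ≤ K) (hMclD : IsClosed (embDual ι '' M))
    (μ : StrongDual ℝ B) (hμ : μ ∈ M)
    (A : (ℝ → StrongDual ℝ B) → ℝ → (D →L[ℝ] B))
    (U : (ℝ → StrongDual ℝ B) → ℝ → ℝ → (B →L[ℝ] B))
    (UD : (ℝ → StrongDual ℝ B) → ℝ → ℝ → (D →L[ℝ] D))
    (hAbdd : ∀ ξ, AdmCurve ι M T ξ → ∀ t ∈ Icc (0:ℝ) T, ‖A ξ t‖ ≤ c₁)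
    (hAlip : ∀ ξ η, AdmCurve ι M T ξ → AdmCurve ι M T η → ∀ t ∈ Icc (0:ℝ) T,
      ‖A ξ t - A η t‖ ≤
        c₁ * ⨆ s : Icc (0:ℝ) T, ‖embDual ι (ξ (s:ℝ)) - embDual ι (η (s:ℝ))‖)
    (hUid : ∀ ξ t, U ξ t t = ContinuousLinearMap.id ℝ B)
    (hUDcompat : ∀ ξ t s f, ι (UD ξ t s f) = U ξ t s (ι f))
    (hUbdd : ∀ ξ, AdmCurve ι M T ξ → ∀ t s, 0 ≤ t → t ≤ s → s ≤ T → ‖U ξ t s‖ ≤ c₃)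
    (hUDbdd : ∀ ξ, AdmCurve ι M T ξ → ∀ t s, 0 ≤ t → t ≤ s → s ≤ T → ‖UD ξ t s‖ ≤ c₂)
    (hgen₁ : ∀ ξ, AdmCurve ι M T ξ → ∀ (f : D) (t : ℝ), t ∈ Icc (0:ℝ) T →
      ∀ s ∈ Icc t T,
      HasDerivWithinAt (fun r => U ξ t r (ι f)) (U ξ t s (A ξ s f)) (Icc t T) s)
    (hgen₂ : ∀ ξ, AdmCurve ι M T ξ → ∀ (f : D) (r : ℝ), r ∈ Icc (0:ℝ) T →
      ∀ s ∈ Icc (0:ℝ) r,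
      HasDerivWithinAt (fun q => U ξ q r (ι f)) (-(A ξ s (UD ξ s r f)))
        (Icc (0:ℝ) r) s)
    (hpres : ∀ ξ, AdmCurve ι M T ξ → ∀ t s, 0 ≤ t → t ≤ s → s ≤ T →
      ∀ ν ∈ M, ν.comp (U ξ t s) ∈ M)
    (hsmall : c₁ * c₂ * c₃ * K * T < 1) :
    (∀ ξ₁ ξ₂, AdmCurve ι M T ξ₁ → AdmCurve ι M T ξ₂ → ξ₁ 0 = μ → ξ₂ 0 = μ →
      (⨆ t : Icc (0:ℝ) T,
        ‖embDual ι (μ.comp (U ξ₁ 0 (t:ℝ))) - embDual ι (μ.comp (U ξ₂ 0 (t:ℝ)))‖) ≤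
      (c₁ * c₂ * c₃ * K * T) *
        ⨆ s : Icc (0:ℝ) T, ‖embDual ι (ξ₁ (s:ℝ)) - embDual ι (ξ₂ (s:ℝ))‖) ∧
    (∃ ξ, AdmCurve ι M T ξ ∧ ξ 0 = μ ∧
      ∀ t ∈ Icc (0:ℝ) T, ξ t = μ.comp (U ξ 0 t)) ∧
    (∀ ξ η, AdmCurve ι M T ξ → AdmCurve ι M T η → ξ 0 = μ → η 0 = μ →
      (∀ t ∈ Icc (0:ℝ) T, ξ t = μ.comp (U ξ 0 t)) →
      (∀ t ∈ Icc (0:ℝ) T, η t = μ.comp (U η 0 t)) → EqOn ξ η (Icc (0:ℝ) T)) ∧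
    (∀ ξ, AdmCurve ι M T ξ → ξ 0 = μ →
      ((∀ t ∈ Icc (0:ℝ) T, ξ t = μ.comp (U ξ 0 t)) ↔
        (∀ (f : D), ∀ t ∈ Icc (0:ℝ) T,
          HasDerivWithinAt (fun s => ξ s (ι f)) (ξ t (A ξ t f)) (Icc (0:ℝ) T) t))) := by
  have hk₀ : 0 ≤ c₁ * c₂ * c₃ * K * T := by positivity
  have hΦ : ∀ ξ, AdmCurve ι M T ξ → AdmCurve ι M T (fun t => μ.comp (U ξ 0 t)) := fun ξ hξ =>
    ⟨fun t ht => hpres ξ hξ 0 t le_rfl ht.1 ht.2 μ hμ,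
      continuousOn_embDual_comp_propagator (convex_Icc 0 T) (hAbdd ξ hξ)
        (fun s hs => hUbdd ξ hξ 0 s le_rfl hs.1 hs.2) (fun f => hgen₁ ξ hξ f 0 ⟨le_rfl, hT.le⟩) μ⟩
  have hcontr : ∀ ξ η, AdmCurve ι M T ξ → AdmCurve ι M T η →
      supDist ι T (fun t => μ.comp (U ξ 0 t)) (fun t => μ.comp (U η 0 t)) ≤
        c₁ * c₂ * c₃ * K * T * supDist ι T ξ η := fun ξ η hξ hη =>
    (supDist_comp_propagator_le hιdense hT.le (hMbdd μ hμ) (hUid ξ 0) (hUid η) (hUDcompat η)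
      (fun s hs => hUbdd ξ hξ 0 s le_rfl hs.1 hs.2) (hUDbdd η hη) (hAlip ξ η hξ hη)
      (fun g => hgen₁ ξ hξ g 0 ⟨le_rfl, hT.le⟩) (hgen₂ η hη)).trans_eq (by rw [supDist]; ring)
  refine ⟨fun ξ₁ ξ₂ h₁ h₂ _ _ => hcontr ξ₁ ξ₂ h₁ h₂, ?_,
    fun ξ η hξ hη _ _ hfξ hfη => eqOn_of_supDist_le hιdense hsmall hξ hη
      ((supDist_congr (ι := ι) hfξ hfη).trans_le (hcontr ξ η hξ hη)),
    fun ξ hξ hξ0 => ⟨fun hfix => ?_, fun hkin => ?_⟩⟩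
  · obtain ⟨ξ, hξ, hfix⟩ :=
      exists_admCurve_eqOn_of_supDist_le hιdense hT.le hMclD hμ hk₀ hsmall hΦ hcontr
    refine ⟨ξ, hξ, ?_, hfix⟩
    rw [hfix ⟨le_rfl, hT.le⟩]
    exact congrArg μ.comp (hUid ξ 0)
  · exact hasDerivWithinAt_of_eqOn_comp_propagator hfix (fun f => hgen₁ ξ hξ f 0 ⟨le_rfl, hT.le⟩)
  · exact hξ0 ▸ eqOn_comp_propagator_of_hasDerivWithinAt hιdense (fun t ht => hMbdd _ (hξ.1 t ht))
      hξ.2 (hUid ξ) (hUDcompat ξ) (hgen₂ ξ hξ) hkin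

/-- under `c₁c₂c₃KT < 1` the map `ξ ↦ (t ↦ Ũ^{t,0}[ξ]μ)` is a contraction
with constant `c₁c₂c₃KT`; it has a fixed point, unique on `[0,T]`, and the fixed points
are exactly the solutions of the path-dependent kinetic equation. -/
theorem stmt1
    {B D : Type*} [NormedAddCommGroup B] [NormedSpace ℝ B] [CompleteSpace B]
    [NormedAddCommGroup D] [NormedSpace ℝ D] [CompleteSpace D]
    (ι : D →L[ℝ] B) (hιdense : DenseRange ι) (hιnorm : ∀ f : D, ‖ι f‖ ≤ ‖f‖)
    (T K c₁ c₂ c₃ : ℝ) (hT : 0 < T) (hK : 0 < K)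
    (hc₁ : 0 < c₁) (hc₂ : 0 < c₂) (hc₃ : 0 < c₃)
    (M : Set (StrongDual ℝ B)) (hMne : M.Nonempty) (hMconv : Convex ℝ M)
    (hMbdd : ∀ ν ∈ M, ‖ν‖ ≤ K) (hMclB : IsClosed M)
    (hMclD : IsClosed (embDual ι '' M))
    (μ : StrongDual ℝ B) (hμ : μ ∈ M)
    (A : (ℝ → StrongDual ℝ B) → ℝ → (D →L[ℝ] B))
    (U : (ℝ → StrongDual ℝ B) → ℝ → ℝ → (B →L[ℝ] B))
    (UD : (ℝ → StrongDual ℝ B) → ℝ → ℝ → (D →L[ℝ] D))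
    (hAbdd : ∀ ξ, AdmCurve ι M T ξ → ∀ t ∈ Icc (0:ℝ) T, ‖A ξ t‖ ≤ c₁)
    (hAlip : ∀ ξ η, AdmCurve ι M T ξ → AdmCurve ι M T η → ∀ t ∈ Icc (0:ℝ) T,
      ‖A ξ t - A η t‖ ≤
        c₁ * ⨆ s : Icc (0:ℝ) T, ‖embDual ι (ξ (s:ℝ)) - embDual ι (η (s:ℝ))‖)
    (hUid : ∀ ξ t, U ξ t t = ContinuousLinearMap.id ℝ B)
    (hUchain : ∀ ξ t s r, t ≤ s → s ≤ r → (U ξ t s).comp (U ξ s r) = U ξ t r)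
    (hUDcompat : ∀ ξ t s f, ι (UD ξ t s f) = U ξ t s (ι f))
    (hUbdd : ∀ ξ, AdmCurve ι M T ξ → ∀ t s, 0 ≤ t → t ≤ s → s ≤ T → ‖U ξ t s‖ ≤ c₃)
    (hUDbdd : ∀ ξ, AdmCurve ι M T ξ → ∀ t s, 0 ≤ t → t ≤ s → s ≤ T → ‖UD ξ t s‖ ≤ c₂)
    (hUcont : ∀ ξ, AdmCurve ι M T ξ → ∀ v : B,
      ContinuousOn (fun q : ℝ × ℝ => U ξ q.1 q.2 v)
        {q : ℝ × ℝ | 0 ≤ q.1 ∧ q.1 ≤ q.2 ∧ q.2 ≤ T})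
    (hgen₁ : ∀ ξ, AdmCurve ι M T ξ → ∀ (f : D) (t : ℝ), t ∈ Icc (0:ℝ) T →
      ∀ s ∈ Icc t T,
      HasDerivWithinAt (fun r => U ξ t r (ι f)) (U ξ t s (A ξ s f)) (Icc t T) s)
    (hgen₂ : ∀ ξ, AdmCurve ι M T ξ → ∀ (f : D) (r : ℝ), r ∈ Icc (0:ℝ) T →
      ∀ s ∈ Icc (0:ℝ) r,
      HasDerivWithinAt (fun q => U ξ q r (ι f)) (-(A ξ s (UD ξ s r f)))
        (Icc (0:ℝ) r) s)
    (hpres : ∀ ξ, AdmCurve ι M T ξ → ∀ t s, 0 ≤ t → t ≤ s → s ≤ T →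
      ∀ ν ∈ M, ν.comp (U ξ t s) ∈ M)
    (hsmall : c₁ * c₂ * c₃ * K * T < 1) :
    (∀ ξ₁ ξ₂, AdmCurve ι M T ξ₁ → AdmCurve ι M T ξ₂ → ξ₁ 0 = μ → ξ₂ 0 = μ →
      (⨆ t : Icc (0:ℝ) T,
        ‖embDual ι (μ.comp (U ξ₁ 0 (t:ℝ))) - embDual ι (μ.comp (U ξ₂ 0 (t:ℝ)))‖) ≤
      (c₁ * c₂ * c₃ * K * T) *
        ⨆ s : Icc (0:ℝ) T, ‖embDual ι (ξ₁ (s:ℝ)) - embDual ι (ξ₂ (s:ℝ))‖) ∧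
    (∃ ξ, AdmCurve ι M T ξ ∧ ξ 0 = μ ∧
      ∀ t ∈ Icc (0:ℝ) T, ξ t = μ.comp (U ξ 0 t)) ∧
    (∀ ξ η, AdmCurve ι M T ξ → AdmCurve ι M T η → ξ 0 = μ → η 0 = μ →
      (∀ t ∈ Icc (0:ℝ) T, ξ t = μ.comp (U ξ 0 t)) →
      (∀ t ∈ Icc (0:ℝ) T, η t = μ.comp (U η 0 t)) → EqOn ξ η (Icc (0:ℝ) T)) ∧
    (∀ ξ, AdmCurve ι M T ξ → ξ 0 = μ →
      ((∀ t ∈ Icc (0:ℝ) T, ξ t = μ.comp (U ξ 0 t)) ↔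
        (∀ (f : D), ∀ t ∈ Icc (0:ℝ) T,
          HasDerivWithinAt (fun s => ξ s (ι f)) (ξ t (A ξ t f)) (Icc (0:ℝ) T) t))) :=
  stmt1_general ι hιdense T K c₁ c₂ c₃ hT hK hc₁ hc₂ hc₃ M hMbdd hMclD μ hμ A U UD hAbdd hAlip hUid
    hUDcompat hUbdd hUDbdd hgen₁ hgen₂ hpres hsmall
end
end

section
/- Under the local well-posedness assumptions with c₁ c₂ c₃ K T < 1, the solution map μ ↦ Φ^·(μ) of the path-dependent kinetic equation is Lipschitz continuous in initial data: for μ, η ∈ M, sup_{t∈[0,T]} ‖Φ^t(μ) − Φ^t(η)‖_{D*} ≤ (c₂ / (1 − c₁c₂c₃KT)) ‖μ − η‖_{D*}. -/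
set_option autoImplicit false

open MeasureTheory Set NormedSpace

noncomputable section

/-! For fixed `t` and `f ∈ D`, the interpolation `s ↦ U^{0,s}[ξ] U^{s,t}[η] f` runs from
`U^{0,t}[η] f` to `U^{0,t}[ξ] f` and has derivative `U^{0,s}[ξ] (A[s,ξ] - A[s,η]) U^{s,t}[η] f`,
so the mean value inequality bounds `‖(U^{0,t}[ξ] - U^{0,t}[η]) f‖` by `c₁c₂c₃ t ‖f‖` times the
`D*`-distance `Δ` of the two curves. Pairing with the fixed-point identities gives
`Δ ≤ c₂ ‖μ - η‖_{D*} + c₁c₂c₃KT Δ`, and `c₁c₂c₃KT < 1` lets the last term be absorbed. -/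

open Filter Topology

/-- Unlike `HasDerivWithinAt.clm_apply`, `L` need only be differentiable at the single vector
`v x`; a uniform bound on `‖L r‖` takes the place of differentiability in operator norm. -/
theorem HasDerivWithinAt.clm_apply_of_norm_le {𝕜 E F : Type*} [NontriviallyNormedField 𝕜]
    [NormedAddCommGroup E] [NormedSpace 𝕜 E] [NormedAddCommGroup F] [NormedSpace 𝕜 F]
    {L : 𝕜 → E →L[𝕜] F} {v : 𝕜 → E} {v' : E} {g : F} {s : Set 𝕜} {x : 𝕜} {C : ℝ}
    (hv : HasDerivWithinAt v v' s x) (hL : HasDerivWithinAt (fun r => L r (v x)) g s x)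
    (hLbdd : ∀ r ∈ s, ‖L r‖ ≤ C) (hLcont : ContinuousWithinAt (fun r => L r v') s x) :
    HasDerivWithinAt (fun r => L r (v r)) (L x v' + g) s x := by
  rw [hasDerivWithinAt_iff_tendsto_slope] at hv hL ⊢
  have hslope : slope (fun r => L r (v r)) x
      = fun r => L r (slope v x r) + slope (fun r => L r (v x)) x r := by
    ext r
    simp only [slope_def_module]
    rw [map_smul, map_sub, ← smul_add]
    congr 1
    abel
  rw [hslope]
  refine Tendsto.add ?_ hL
  have hsmall : Tendsto (fun r => L r (slope v x r - v')) (𝓝[s \ {x}] x) (𝓝 0) := by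
    refine squeeze_zero_norm' ?_ (by simpa using (hv.sub_const v').norm.const_mul C)
    filter_upwards [self_mem_nhdsWithin] with r hr
    exact (L r).le_of_opNorm_le (hLbdd r hr.1) _
  have hlim := hsmall.add (hLcont.mono_left (nhdsWithin_mono _ sdiff_subset))
  rw [zero_add] at hlim
  exact hlim.congr fun r => by rw [← map_add, sub_add_cancel]

section Propagators

variable {B D : Type*} [NormedAddCommGroup B] [NormedSpace ℝ B]
  [NormedAddCommGroup D] [NormedSpace ℝ D] (ι : D →L[ℝ] B)

theorem norm_interpolation_sub_le {V : ℝ → B →L[ℝ] B} {W : ℝ → D →L[ℝ] D}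
    {A₁ A₂ : ℝ → D →L[ℝ] B} {a b C C' δ : ℝ} (hab : a ≤ b)
    (hV : ∀ f, ∀ s ∈ Icc a b, HasDerivWithinAt (fun r => V r (ι f)) (V s (A₁ s f)) (Icc a b) s)
    (hW : ∀ f, ∀ s ∈ Icc a b,
      HasDerivWithinAt (fun r => ι (W r f)) (-A₂ s (W s f)) (Icc a b) s)
    (hVcont : ∀ v, ContinuousOn (fun s => V s v) (Icc a b))
    (hVbdd : ∀ s ∈ Icc a b, ‖V s‖ ≤ C) (hWbdd : ∀ s ∈ Icc a b, ‖W s‖ ≤ C')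
    (hA : ∀ s ∈ Icc a b, ‖A₁ s - A₂ s‖ ≤ δ) (f : D) :
    ‖V b (ι (W b f)) - V a (ι (W a f))‖ ≤ C * δ * C' * ‖f‖ * (b - a) := by
  have hderiv : ∀ s ∈ Icc a b, HasDerivWithinAt (fun r => V r (ι (W r f)))
      (V s ((A₁ s - A₂ s) (W s f))) (Icc a b) s := by
    intro s hs
    convert (hW f s hs).clm_apply_of_norm_le (hV (W s f) s hs) hVbdd
      ((hVcont _).continuousWithinAt hs) using 1
    rw [sub_apply, map_sub, map_neg]
    abel
  have hbound : ∀ s ∈ Icc a b, ‖V s ((A₁ s - A₂ s) (W s f))‖ ≤ C * δ * C' * ‖f‖ := by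
    intro s hs
    have hC : 0 ≤ C := (norm_nonneg _).trans (hVbdd s hs)
    have hδ : 0 ≤ δ := (norm_nonneg _).trans (hA s hs)
    calc ‖V s ((A₁ s - A₂ s) (W s f))‖ ≤ C * (δ * (C' * ‖f‖)) := by
          refine ((V s).le_of_opNorm_le (hVbdd s hs) _).trans ?_
          gcongr
          refine ((A₁ s - A₂ s).le_of_opNorm_le (hA s hs) _).trans ?_
          gcongr
          exact (W s).le_of_opNorm_le (hWbdd s hs) f
      _ = C * δ * C' * ‖f‖ := by ring
  have hmvt := (convex_Icc a b).norm_image_sub_le_of_norm_hasDerivWithin_le hderiv hbound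
    (left_mem_Icc.2 hab) (right_mem_Icc.2 hab)
  rwa [Real.norm_of_nonneg (sub_nonneg.2 hab)] at hmvt

theorem norm_propagator_sub_comp_le {U₁ U₂ : ℝ → ℝ → B →L[ℝ] B} {UD₂ : ℝ → ℝ → D →L[ℝ] D}
    {A₁ A₂ : ℝ → D →L[ℝ] B} {T C C' δ t : ℝ}
    (hU₁id : U₁ 0 0 = ContinuousLinearMap.id ℝ B)
    (hU₂id : ∀ s, U₂ s s = ContinuousLinearMap.id ℝ B)
    (hcompat : ∀ s r f, ι (UD₂ s r f) = U₂ s r (ι f))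
    (hU₁bdd : ∀ s ∈ Icc (0:ℝ) T, ‖U₁ 0 s‖ ≤ C)
    (hUD₂bdd : ∀ s r, 0 ≤ s → s ≤ r → r ≤ T → ‖UD₂ s r‖ ≤ C')
    (hA : ∀ s ∈ Icc (0:ℝ) T, ‖A₁ s - A₂ s‖ ≤ δ)
    (hU₁cont : ∀ v, ContinuousOn (fun s => U₁ 0 s v) (Icc 0 T))
    (hgen₁ : ∀ f, ∀ s ∈ Icc (0:ℝ) T,
      HasDerivWithinAt (fun r => U₁ 0 r (ι f)) (U₁ 0 s (A₁ s f)) (Icc 0 T) s)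
    (hgen₂ : ∀ f, ∀ r ∈ Icc (0:ℝ) T, ∀ s ∈ Icc (0:ℝ) r,
      HasDerivWithinAt (fun q => U₂ q r (ι f)) (-(A₂ s (UD₂ s r f))) (Icc 0 r) s)
    (ht : t ∈ Icc (0:ℝ) T) :
    ‖(U₁ 0 t - U₂ 0 t).comp ι‖ ≤ C * δ * C' * t := by
  have hsub : Icc 0 t ⊆ Icc 0 T := Icc_subset_Icc_right ht.2
  have hC : 0 ≤ C := (norm_nonneg _).trans (hU₁bdd 0 (hsub (left_mem_Icc.2 ht.1)))
  have hδ : 0 ≤ δ := (norm_nonneg _).trans (hA 0 (hsub (left_mem_Icc.2 ht.1)))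
  have hC' : 0 ≤ C' := (norm_nonneg _).trans (hUD₂bdd t t ht.1 le_rfl ht.2)
  refine ContinuousLinearMap.opNorm_le_bound _ (by have := ht.1; positivity) fun f => ?_
  have h := norm_interpolation_sub_le ι (V := U₁ 0) (W := fun s => UD₂ s t) ht.1
    (fun f s hs => (hgen₁ f s (hsub hs)).mono hsub)
    (fun f s hs => by simpa only [hcompat] using hgen₂ f t ht s hs)
    (fun v => (hU₁cont v).mono hsub) (fun s hs => hU₁bdd s (hsub hs))
    (fun s hs => hUD₂bdd s t hs.1 hs.2 ht.2) (fun s hs => hA s (hsub hs)) f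
  simp only [hcompat, hU₁id, hU₂id, ContinuousLinearMap.id_apply, sub_zero] at h
  simpa only [ContinuousLinearMap.comp_apply, sub_apply, mul_right_comm _ ‖f‖] using h

end Propagators

section EmbDual

variable {B D : Type*} [NormedAddCommGroup B] [NormedSpace ℝ B]
  [NormedAddCommGroup D] [NormedSpace ℝ D] (ι : D →L[ℝ] B)

theorem embDual_comp_sub_embDual_comp (μ η : StrongDual ℝ B) {P Q : B →L[ℝ] B}
    {PD : D →L[ℝ] D} (hPD : ∀ f, ι (PD f) = P (ι f)) :
    embDual ι (μ.comp P) - embDual ι (η.comp Q)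
      = (embDual ι (μ - η)).comp PD + η.comp ((P - Q).comp ι) := by
  ext f
  simp only [embDual, hPD, sub_apply, add_apply, ContinuousLinearMap.comp_apply, map_sub]
  ring

theorem norm_embDual_comp_sub_embDual_comp_le {μ η : StrongDual ℝ B} {P Q : B →L[ℝ] B}
    {PD : D →L[ℝ] D} {c K ε : ℝ} (hPD : ∀ f, ι (PD f) = P (ι f)) (hPDc : ‖PD‖ ≤ c)
    (hη : ‖η‖ ≤ K) (hPQ : ‖(P - Q).comp ι‖ ≤ ε) :
    ‖embDual ι (μ.comp P) - embDual ι (η.comp Q)‖ ≤ c * ‖embDual ι (μ - η)‖ + K * ε := by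
  have hK : 0 ≤ K := (norm_nonneg _).trans hη
  rw [embDual_comp_sub_embDual_comp ι μ η hPD, mul_comm c]
  refine norm_add_le_of_le ((ContinuousLinearMap.opNorm_comp_le _ _).trans ?_)
    ((ContinuousLinearMap.opNorm_comp_le _ _).trans ?_)
  · gcongr
  · gcongr

end EmbDual

theorem stmt2_general
    {B D : Type*} [NormedAddCommGroup B] [NormedSpace ℝ B]
    [NormedAddCommGroup D] [NormedSpace ℝ D]
    (ι : D →L[ℝ] B)
    (T K c₁ c₂ c₃ : ℝ) (hT : 0 < T)
    (hc₁ : 0 < c₁) (hc₂ : 0 < c₂) (hc₃ : 0 < c₃)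
    (M : Set (StrongDual ℝ B))
    (hMbdd : ∀ ν ∈ M, ‖ν‖ ≤ K)
    (μ : StrongDual ℝ B)
    (A : (ℝ → StrongDual ℝ B) → ℝ → (D →L[ℝ] B))
    (U : (ℝ → StrongDual ℝ B) → ℝ → ℝ → (B →L[ℝ] B))
    (UD : (ℝ → StrongDual ℝ B) → ℝ → ℝ → (D →L[ℝ] D))
    (hAlip : ∀ ξ η, AdmCurve ι M T ξ → AdmCurve ι M T η → ∀ t ∈ Icc (0:ℝ) T,
      ‖A ξ t - A η t‖ ≤
        c₁ * ⨆ s : Icc (0:ℝ) T, ‖embDual ι (ξ (s:ℝ)) - embDual ι (η (s:ℝ))‖)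
    (hUid : ∀ ξ t, U ξ t t = ContinuousLinearMap.id ℝ B)
    (hUDcompat : ∀ ξ t s f, ι (UD ξ t s f) = U ξ t s (ι f))
    (hUbdd : ∀ ξ, AdmCurve ι M T ξ → ∀ t s, 0 ≤ t → t ≤ s → s ≤ T → ‖U ξ t s‖ ≤ c₃)
    (hUDbdd : ∀ ξ, AdmCurve ι M T ξ → ∀ t s, 0 ≤ t → t ≤ s → s ≤ T → ‖UD ξ t s‖ ≤ c₂)
    (hUcont : ∀ ξ, AdmCurve ι M T ξ → ∀ v : B,
      ContinuousOn (fun q : ℝ × ℝ => U ξ q.1 q.2 v)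
        {q : ℝ × ℝ | 0 ≤ q.1 ∧ q.1 ≤ q.2 ∧ q.2 ≤ T})
    (hgen₁ : ∀ ξ, AdmCurve ι M T ξ → ∀ (f : D) (t : ℝ), t ∈ Icc (0:ℝ) T →
      ∀ s ∈ Icc t T,
      HasDerivWithinAt (fun r => U ξ t r (ι f)) (U ξ t s (A ξ s f)) (Icc t T) s)
    (hgen₂ : ∀ ξ, AdmCurve ι M T ξ → ∀ (f : D) (r : ℝ), r ∈ Icc (0:ℝ) T →
      ∀ s ∈ Icc (0:ℝ) r,
      HasDerivWithinAt (fun q => U ξ q r (ι f)) (-(A ξ s (UD ξ s r f)))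
        (Icc (0:ℝ) r) s)
    (hsmall : c₁ * c₂ * c₃ * K * T < 1) :
    ∀ η, η ∈ M → ∀ ξc ηc, AdmCurve ι M T ξc → AdmCurve ι M T ηc →
    ξc 0 = μ → ηc 0 = η →
    (∀ t ∈ Icc (0:ℝ) T, ξc t = μ.comp (U ξc 0 t)) →
    (∀ t ∈ Icc (0:ℝ) T, ηc t = η.comp (U ηc 0 t)) →
    (⨆ t : Icc (0:ℝ) T, ‖embDual ι (ξc (t:ℝ)) - embDual ι (ηc (t:ℝ))‖) ≤
      (c₂ / (1 - c₁ * c₂ * c₃ * K * T)) * ‖embDual ι (μ - η)‖ := by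
  intro η hη ξc ηc hξadm hηadm _ _ hξfix hηfix
  have : Nonempty (Icc (0:ℝ) T) := ⟨⟨0, le_rfl, hT.le⟩⟩
  set Δ := ⨆ s : Icc (0:ℝ) T, ‖embDual ι (ξc (s:ℝ)) - embDual ι (ηc (s:ℝ))‖
  have hΔ₀ : 0 ≤ Δ := Real.iSup_nonneg fun _ => norm_nonneg _
  have hprop : ∀ t ∈ Icc (0:ℝ) T, ‖(U ξc 0 t - U ηc 0 t).comp ι‖ ≤ c₃ * (c₁ * Δ) * c₂ * T :=
    fun t ht => (norm_propagator_sub_comp_le ι (hUid ξc 0) (hUid ηc) (hUDcompat ηc)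
      (fun s hs => hUbdd ξc hξadm 0 s le_rfl hs.1 hs.2) (hUDbdd ηc hηadm)
      (hAlip ξc ηc hξadm hηadm)
      (fun v => (hUcont ξc hξadm v).comp (continuous_const.prodMk continuous_id).continuousOn
        fun s (hs : s ∈ Icc 0 T) => ⟨le_rfl, hs.1, hs.2⟩)
      (fun f s hs => hgen₁ ξc hξadm f 0 ⟨le_rfl, hT.le⟩ s hs) (hgen₂ ηc hηadm) ht).trans
      (by gcongr; exact ht.2)
  have hstep : Δ ≤ c₂ * ‖embDual ι (μ - η)‖ + c₁ * c₂ * c₃ * K * T * Δ := by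
    refine ciSup_le fun ⟨t, ht⟩ => ?_
    rw [hξfix t ht, hηfix t ht]
    refine (norm_embDual_comp_sub_embDual_comp_le ι (hUDcompat ξc 0 t)
      (hUDbdd ξc hξadm 0 t le_rfl ht.1 ht.2) (hMbdd η hη) (hprop t ht)).trans_eq ?_
    ring
  rw [div_mul_eq_mul_div, le_div_iff₀ (by linarith)]
  linarith

/-- Lipschitz dependence of the solution of the path-dependent kinetic
equation on the initial data, with constant `c₂/(1 − c₁c₂c₃KT)`. -/
theorem stmt2
    {B D : Type*} [NormedAddCommGroup B] [NormedSpace ℝ B] [CompleteSpace B]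
    [NormedAddCommGroup D] [NormedSpace ℝ D] [CompleteSpace D]
    (ι : D →L[ℝ] B) (hιdense : DenseRange ι) (hιnorm : ∀ f : D, ‖ι f‖ ≤ ‖f‖)
    (T K c₁ c₂ c₃ : ℝ) (hT : 0 < T) (hK : 0 < K)
    (hc₁ : 0 < c₁) (hc₂ : 0 < c₂) (hc₃ : 0 < c₃)
    (M : Set (StrongDual ℝ B)) (hMne : M.Nonempty) (hMconv : Convex ℝ M)
    (hMbdd : ∀ ν ∈ M, ‖ν‖ ≤ K) (hMclB : IsClosed M)
    (hMclD : IsClosed (embDual ι '' M))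
    (μ : StrongDual ℝ B) (hμ : μ ∈ M)
    (A : (ℝ → StrongDual ℝ B) → ℝ → (D →L[ℝ] B))
    (U : (ℝ → StrongDual ℝ B) → ℝ → ℝ → (B →L[ℝ] B))
    (UD : (ℝ → StrongDual ℝ B) → ℝ → ℝ → (D →L[ℝ] D))
    (hAbdd : ∀ ξ, AdmCurve ι M T ξ → ∀ t ∈ Icc (0:ℝ) T, ‖A ξ t‖ ≤ c₁)
    (hAlip : ∀ ξ η, AdmCurve ι M T ξ → AdmCurve ι M T η → ∀ t ∈ Icc (0:ℝ) T,
      ‖A ξ t - A η t‖ ≤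
        c₁ * ⨆ s : Icc (0:ℝ) T, ‖embDual ι (ξ (s:ℝ)) - embDual ι (η (s:ℝ))‖)
    (hUid : ∀ ξ t, U ξ t t = ContinuousLinearMap.id ℝ B)
    (hUchain : ∀ ξ t s r, t ≤ s → s ≤ r → (U ξ t s).comp (U ξ s r) = U ξ t r)
    (hUDcompat : ∀ ξ t s f, ι (UD ξ t s f) = U ξ t s (ι f))
    (hUbdd : ∀ ξ, AdmCurve ι M T ξ → ∀ t s, 0 ≤ t → t ≤ s → s ≤ T → ‖U ξ t s‖ ≤ c₃)
    (hUDbdd : ∀ ξ, AdmCurve ι M T ξ → ∀ t s, 0 ≤ t → t ≤ s → s ≤ T → ‖UD ξ t s‖ ≤ c₂)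
    (hUcont : ∀ ξ, AdmCurve ι M T ξ → ∀ v : B,
      ContinuousOn (fun q : ℝ × ℝ => U ξ q.1 q.2 v)
        {q : ℝ × ℝ | 0 ≤ q.1 ∧ q.1 ≤ q.2 ∧ q.2 ≤ T})
    (hgen₁ : ∀ ξ, AdmCurve ι M T ξ → ∀ (f : D) (t : ℝ), t ∈ Icc (0:ℝ) T →
      ∀ s ∈ Icc t T,
      HasDerivWithinAt (fun r => U ξ t r (ι f)) (U ξ t s (A ξ s f)) (Icc t T) s)
    (hgen₂ : ∀ ξ, AdmCurve ι M T ξ → ∀ (f : D) (r : ℝ), r ∈ Icc (0:ℝ) T →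
      ∀ s ∈ Icc (0:ℝ) r,
      HasDerivWithinAt (fun q => U ξ q r (ι f)) (-(A ξ s (UD ξ s r f)))
        (Icc (0:ℝ) r) s)
    (hpres : ∀ ξ, AdmCurve ι M T ξ → ∀ t s, 0 ≤ t → t ≤ s → s ≤ T →
      ∀ ν ∈ M, ν.comp (U ξ t s) ∈ M)
    (hsmall : c₁ * c₂ * c₃ * K * T < 1) :
    ∀ η, η ∈ M → ∀ ξc ηc, AdmCurve ι M T ξc → AdmCurve ι M T ηc →
    ξc 0 = μ → ηc 0 = η →
    (∀ t ∈ Icc (0:ℝ) T, ξc t = μ.comp (U ξc 0 t)) →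
    (∀ t ∈ Icc (0:ℝ) T, ηc t = η.comp (U ηc 0 t)) →
    (⨆ t : Icc (0:ℝ) T, ‖embDual ι (ξc (t:ℝ)) - embDual ι (ηc (t:ℝ))‖) ≤
      (c₂ / (1 - c₁ * c₂ * c₃ * K * T)) * ‖embDual ι (μ - η)‖ :=
  stmt2_general ι T K c₁ c₂ c₃ hT hc₁ hc₂ hc₃ M hMbdd μ A U UD hAlip hUid hUDcompat hUbdd hUDbdd
    hUcont hgen₁ hgen₂ hsmall
end
end

section
/- (Nonlinear Lipschitz dependence combining propagator perturbation and initial-data stability.) Under the standing assumptions (generators Lipschitz with constant c₁ in the sup-D*-metric on curves, propagator bounds ‖U^{t,s}[ξ]‖_{D→D} ≤ c₂ and ‖U^{t,s}[ξ]‖_{B→B} ≤ c₃, measures bounded by K in B*), any two solutions μ_t = Ũ^{t,0}[{μ_·}]μ and η_t = Ũ^{t,0}[{η_·}]η of the path-dependent kinetic equation satisfy the a priori inequality sup_{t∈[0,T]}‖μ_t − η_t‖_{D*} ≤ c₁c₂c₃TK · sup_{t∈[0,T]}‖μ_t − η_t‖_{D*} + c₂‖μ − η‖_{D*}, obtained from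 the decomposition μ_t − η_t = (Ũ^{t,0}[{μ_·}] − Ũ^{t,0}[{η_·}])μ + Ũ^{t,0}[{η_·}](μ − η). -/
/-!
Write `μ_t − η_t = (Ũ^{t,0}[μ_·] − Ũ^{t,0}[η_·]) μ + Ũ^{t,0}[η_·] (μ − η)`. The second term is
bounded in `D*` by `c₂ ‖μ − η‖_{D*}`. For the first, the Duhamel interpolation
`s ↦ U^{0,s}[μ_·] U^{s,t}[η_·] ι f` runs from `U^{0,t}[η_·] ι f` to `U^{0,t}[μ_·] ι f` and has
derivative `U^{0,s}[μ_·] (A[s,μ_·] − A[s,η_·]) U^{s,t}[η_·] f`, of norm at most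
`c₃ · c₁ sup‖μ_· − η_·‖_{D*} · c₂ ‖f‖`; the mean value inequality gives the factor `t ≤ T`.
-/

set_option autoImplicit false

open MeasureTheory Set NormedSpace

noncomputable section

open Filter Topology

section StrongProductRule

variable {𝕜 E G : Type*} [NontriviallyNormedField 𝕜]
  [NormedAddCommGroup E] [NormedSpace 𝕜 E] [NormedAddCommGroup G] [NormedSpace 𝕜 G]

theorem tendsto_clm_apply_of_eventually_norm_le {α : Type*} {l : Filter α}
    {F : α → E →L[𝕜] G} {v : α → E} {v₀ : E} {y : G} {C : ℝ}
    (hbdd : ∀ᶠ r in l, ‖F r‖ ≤ C) (hF : Tendsto (fun r => F r v₀) l (𝓝 y))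
    (hv : Tendsto v l (𝓝 v₀)) :
    Tendsto (fun r => F r (v r)) l (𝓝 y) := by
  have hsmall : Tendsto (fun r => F r (v r - v₀)) l (𝓝 0) := by
    refine squeeze_zero_norm' ?_ (by simpa using (hv.sub_const v₀).norm.const_mul C)
    filter_upwards [hbdd] with r hr using (F r).le_of_opNorm_le hr _
  simpa using hsmall.add hF

/-- Product rule for an operator family that is only strongly continuous: it suffices that
`r ↦ F r (u s)` be differentiable, because `r ↦ F r (u r - u s)` has a vanishing factor at `s`. -/
theorem HasDerivWithinAt.clm_apply_of_eventually_norm_le {F : 𝕜 → E →L[𝕜] G} {u : 𝕜 → E}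
    {u' : E} {F' : G} {S : Set 𝕜} {s : 𝕜} {C : ℝ}
    (hF : HasDerivWithinAt (fun r => F r (u s)) F' S s) (hu : HasDerivWithinAt u u' S s)
    (hcont : ContinuousWithinAt (fun r => F r u') S s) (hbdd : ∀ᶠ r in 𝓝[S] s, ‖F r‖ ≤ C) :
    HasDerivWithinAt (fun r => F r (u r)) (F' + F s u') S s := by
  have hvanish : HasDerivWithinAt (fun r => F r (u r - u s)) (F s u') S s := by
    rw [hasDerivWithinAt_iff_tendsto_slope] at hu ⊢
    have hslope : slope (fun r => F r (u r - u s)) s = fun r => F r (slope u s r) := by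
      ext r
      simp [slope_def_module]
    rw [hslope]
    exact tendsto_clm_apply_of_eventually_norm_le
      (hbdd.filter_mono (nhdsWithin_mono _ sdiff_subset))
      (hcont.tendsto.mono_left (nhdsWithin_mono _ sdiff_subset)) hu
  convert hF.add hvanish using 1
  ext r
  simp

end StrongProductRule

section PropagatorDifference

variable {B D : Type*} [NormedAddCommGroup B] [NormedSpace ℝ B]
  [NormedAddCommGroup D] [NormedSpace ℝ D] (ι : D →L[ℝ] B)
  {U V : ℝ → ℝ → B →L[ℝ] B} {VD : ℝ → ℝ → D →L[ℝ] D} {A A' : ℝ → D →L[ℝ] B}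

theorem norm_propagator_apply_sub_le (f : D) {a t L c₂ c₃ : ℝ} (hat : a ≤ t)
    (hUa : U a a = ContinuousLinearMap.id ℝ B) (hVt : V t t = ContinuousLinearMap.id ℝ B)
    (hUgen : ∀ h : D, ∀ s ∈ Icc a t,
      HasDerivWithinAt (fun r => U a r (ι h)) (U a s (A s h)) (Icc a t) s)
    (hVgen : ∀ s ∈ Icc a t,
      HasDerivWithinAt (fun q => V q t (ι f)) (-(A' s (VD s t f))) (Icc a t) s)
    (hcompat : ∀ s, ι (VD s t f) = V s t (ι f))
    (hUcont : ∀ v, ContinuousOn (fun r => U a r v) (Icc a t))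
    (hUbdd : ∀ s ∈ Icc a t, ‖U a s‖ ≤ c₃) (hVDbdd : ∀ s ∈ Icc a t, ‖VD s t‖ ≤ c₂)
    (hA : ∀ s ∈ Icc a t, ‖A s - A' s‖ ≤ L) :
    ‖U a t (ι f) - V a t (ι f)‖ ≤ c₃ * (L * (c₂ * ‖f‖)) * (t - a) := by
  have hderiv : ∀ s ∈ Icc a t, HasDerivWithinAt (fun r => U a r (V r t (ι f)))
      (U a s ((A s - A' s) (VD s t f))) (Icc a t) s := by
    intro s hs
    have hUbdd' : ∀ᶠ r in 𝓝[Icc a t] s, ‖U a r‖ ≤ c₃ :=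
      eventually_nhdsWithin_of_forall hUbdd
    convert ((hcompat s).symm ▸ hUgen (VD s t f) s hs).clm_apply_of_eventually_norm_le
      (hVgen s hs) (hUcont _ s hs) hUbdd' using 1
    simp [sub_eq_add_neg]
  have hbound : ∀ s ∈ Icc a t, ‖U a s ((A s - A' s) (VD s t f))‖ ≤ c₃ * (L * (c₂ * ‖f‖)) :=
    fun s hs => (U a s).le_of_opNorm_le_of_le (hUbdd s hs)
      ((A s - A' s).le_of_opNorm_le_of_le (hA s hs) ((VD s t).le_of_opNorm_le (hVDbdd s hs) f))
  have hmvt := (convex_Icc a t).norm_image_sub_le_of_norm_hasDerivWithin_le hderiv hbound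
    (left_mem_Icc.2 hat) (right_mem_Icc.2 hat)
  simpa [hUa, hVt, Real.norm_of_nonneg (sub_nonneg.2 hat)] using hmvt

theorem norm_embDual_comp_sub_comp_le_s19 {μ η : StrongDual ℝ B} {P Q : B →L[ℝ] B}
    {QD : D →L[ℝ] D} {δ c : ℝ} (hδ : 0 ≤ δ) (hPQ : ∀ f, ‖P (ι f) - Q (ι f)‖ ≤ δ * ‖f‖)
    (hQD : ∀ f, ι (QD f) = Q (ι f)) (hQDbdd : ‖QD‖ ≤ c) :
    ‖embDual ι (μ.comp P) - embDual ι (η.comp Q)‖ ≤ ‖μ‖ * δ + c * ‖embDual ι (μ - η)‖ := by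
  have hsplit : embDual ι (μ.comp P) - embDual ι (η.comp Q)
      = μ.comp ((P - Q).comp ι) + (embDual ι (μ - η)).comp QD := by
    ext f
    simp [embDual, hQD]
  have hPQ' : ‖(P - Q).comp ι‖ ≤ δ := ContinuousLinearMap.opNorm_le_bound _ hδ hPQ
  rw [hsplit, mul_comm c]
  calc _ ≤ ‖μ‖ * ‖(P - Q).comp ι‖ + ‖embDual ι (μ - η)‖ * ‖QD‖ :=
        (norm_add_le _ _).trans
          (add_le_add (μ.opNorm_comp_le _) (ContinuousLinearMap.opNorm_comp_le _ _))
    _ ≤ ‖μ‖ * δ + ‖embDual ι (μ - η)‖ * c := by gcongr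

end PropagatorDifference

theorem stmt19_general
    {B D : Type*} [NormedAddCommGroup B] [NormedSpace ℝ B]
    [NormedAddCommGroup D] [NormedSpace ℝ D]
    (ι : D →L[ℝ] B)
    (T K c₁ c₂ c₃ : ℝ) (hT : 0 < T)
    (hc₁ : 0 < c₁) (hc₂ : 0 < c₂) (hc₃ : 0 < c₃)
    (M : Set (StrongDual ℝ B))
    (hMbdd : ∀ ν ∈ M, ‖ν‖ ≤ K)
    (μ : StrongDual ℝ B) (hμ : μ ∈ M)
    (A : (ℝ → StrongDual ℝ B) → ℝ → (D →L[ℝ] B))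
    (U : (ℝ → StrongDual ℝ B) → ℝ → ℝ → (B →L[ℝ] B))
    (UD : (ℝ → StrongDual ℝ B) → ℝ → ℝ → (D →L[ℝ] D))
    (hAlip : ∀ ξ η, AdmCurve ι M T ξ → AdmCurve ι M T η → ∀ t ∈ Icc (0:ℝ) T,
      ‖A ξ t - A η t‖ ≤
        c₁ * ⨆ s : Icc (0:ℝ) T, ‖embDual ι (ξ (s:ℝ)) - embDual ι (η (s:ℝ))‖)
    (hUid : ∀ ξ t, U ξ t t = ContinuousLinearMap.id ℝ B)
    (hUDcompat : ∀ ξ t s f, ι (UD ξ t s f) = U ξ t s (ι f))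
    (hUbdd : ∀ ξ, AdmCurve ι M T ξ → ∀ t s, 0 ≤ t → t ≤ s → s ≤ T → ‖U ξ t s‖ ≤ c₃)
    (hUDbdd : ∀ ξ, AdmCurve ι M T ξ → ∀ t s, 0 ≤ t → t ≤ s → s ≤ T → ‖UD ξ t s‖ ≤ c₂)
    (hUcont : ∀ ξ, AdmCurve ι M T ξ → ∀ v : B,
      ContinuousOn (fun q : ℝ × ℝ => U ξ q.1 q.2 v)
        {q : ℝ × ℝ | 0 ≤ q.1 ∧ q.1 ≤ q.2 ∧ q.2 ≤ T})
    (hgen₁ : ∀ ξ, AdmCurve ι M T ξ → ∀ (f : D) (t : ℝ), t ∈ Icc (0:ℝ) T →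
      ∀ s ∈ Icc t T,
      HasDerivWithinAt (fun r => U ξ t r (ι f)) (U ξ t s (A ξ s f)) (Icc t T) s)
    (hgen₂ : ∀ ξ, AdmCurve ι M T ξ → ∀ (f : D) (r : ℝ), r ∈ Icc (0:ℝ) T →
      ∀ s ∈ Icc (0:ℝ) r,
      HasDerivWithinAt (fun q => U ξ q r (ι f)) (-(A ξ s (UD ξ s r f)))
        (Icc (0:ℝ) r) s)
 :
    ∀ η, η ∈ M → ∀ ξc ηc, AdmCurve ι M T ξc → AdmCurve ι M T ηc →
    ξc 0 = μ → ηc 0 = η →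
    (∀ t ∈ Icc (0:ℝ) T, ξc t = μ.comp (U ξc 0 t)) →
    (∀ t ∈ Icc (0:ℝ) T, ηc t = η.comp (U ηc 0 t)) →
    (⨆ t : Icc (0:ℝ) T, ‖embDual ι (ξc (t:ℝ)) - embDual ι (ηc (t:ℝ))‖) ≤
      c₁ * c₂ * c₃ * T * K *
        (⨆ t : Icc (0:ℝ) T, ‖embDual ι (ξc (t:ℝ)) - embDual ι (ηc (t:ℝ))‖) +
      c₂ * ‖embDual ι (μ - η)‖ := by
  intro η _ ξc ηc hξ hη _ _ hξsol hηsol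
  have : Nonempty (Icc (0:ℝ) T) := ⟨⟨0, le_rfl, hT.le⟩⟩
  set S := ⨆ t : Icc (0:ℝ) T, ‖embDual ι (ξc (t:ℝ)) - embDual ι (ηc (t:ℝ))‖
  have hS : 0 ≤ S := Real.iSup_nonneg fun _ => norm_nonneg _
  have hdiff : ∀ t ∈ Icc (0:ℝ) T, ∀ f : D,
      ‖U ξc 0 t (ι f) - U ηc 0 t (ι f)‖ ≤ c₁ * c₂ * c₃ * T * S * ‖f‖ := by
    intro t ht f
    have hsub : Icc 0 t ⊆ Icc 0 T := Icc_subset_Icc_right ht.2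
    calc _ ≤ c₃ * (c₁ * S * (c₂ * ‖f‖)) * (t - 0) :=
          norm_propagator_apply_sub_le ι f ht.1 (hUid _ _) (hUid _ _)
            (fun h s hs => (hgen₁ ξc hξ h 0 ⟨le_rfl, hT.le⟩ s (hsub hs)).mono hsub)
            (hgen₂ ηc hη f t ht) (hUDcompat ηc · t f)
            (fun v => (hUcont ξc hξ v).comp (continuousOn_const.prodMk continuousOn_id)
              fun r hr => ⟨le_rfl, hr.1, hr.2.trans ht.2⟩)
            (fun s hs => hUbdd ξc hξ 0 s le_rfl hs.1 (hsub hs).2)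
            (fun s hs => hUDbdd ηc hη s t hs.1 hs.2 ht.2)
            (fun s hs => hAlip ξc ηc hξ hη s (hsub hs))
      _ ≤ c₃ * (c₁ * S * (c₂ * ‖f‖)) * T := by gcongr; linarith [ht.2]
      _ = c₁ * c₂ * c₃ * T * S * ‖f‖ := by ring
  refine ciSup_le fun ⟨t, ht⟩ => ?_
  rw [hξsol t ht, hηsol t ht]
  calc _ ≤ ‖μ‖ * (c₁ * c₂ * c₃ * T * S) + c₂ * ‖embDual ι (μ - η)‖ :=
        norm_embDual_comp_sub_comp_le_s19 ι (by positivity) (hdiff t ht) (hUDcompat ηc 0 t)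
          (hUDbdd ηc hη 0 t le_rfl ht.1 ht.2)
    _ ≤ K * (c₁ * c₂ * c₃ * T * S) + c₂ * ‖embDual ι (μ - η)‖ := by
        gcongr
        exact hMbdd μ hμ
    _ = c₁ * c₂ * c₃ * T * K * S + c₂ * ‖embDual ι (μ - η)‖ := by ring

/-- the a priori inequality for two solutions of the path-dependent
kinetic equation:
`sup_t‖μ_t − η_t‖_{D*} ≤ c₁c₂c₃TK·sup_t‖μ_t − η_t‖_{D*} + c₂‖μ − η‖_{D*}`. -/
theorem stmt19
    {B D : Type*} [NormedAddCommGroup B] [NormedSpace ℝ B] [CompleteSpace B]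
    [NormedAddCommGroup D] [NormedSpace ℝ D] [CompleteSpace D]
    (ι : D →L[ℝ] B) (hιdense : DenseRange ι) (hιnorm : ∀ f : D, ‖ι f‖ ≤ ‖f‖)
    (T K c₁ c₂ c₃ : ℝ) (hT : 0 < T) (hK : 0 < K)
    (hc₁ : 0 < c₁) (hc₂ : 0 < c₂) (hc₃ : 0 < c₃)
    (M : Set (StrongDual ℝ B)) (hMne : M.Nonempty) (hMconv : Convex ℝ M)
    (hMbdd : ∀ ν ∈ M, ‖ν‖ ≤ K) (hMclB : IsClosed M)
    (hMclD : IsClosed (embDual ι '' M))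
    (μ : StrongDual ℝ B) (hμ : μ ∈ M)
    (A : (ℝ → StrongDual ℝ B) → ℝ → (D →L[ℝ] B))
    (U : (ℝ → StrongDual ℝ B) → ℝ → ℝ → (B →L[ℝ] B))
    (UD : (ℝ → StrongDual ℝ B) → ℝ → ℝ → (D →L[ℝ] D))
    (hAbdd : ∀ ξ, AdmCurve ι M T ξ → ∀ t ∈ Icc (0:ℝ) T, ‖A ξ t‖ ≤ c₁)
    (hAlip : ∀ ξ η, AdmCurve ι M T ξ → AdmCurve ι M T η → ∀ t ∈ Icc (0:ℝ) T,
      ‖A ξ t - A η t‖ ≤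
        c₁ * ⨆ s : Icc (0:ℝ) T, ‖embDual ι (ξ (s:ℝ)) - embDual ι (η (s:ℝ))‖)
    (hUid : ∀ ξ t, U ξ t t = ContinuousLinearMap.id ℝ B)
    (hUchain : ∀ ξ t s r, t ≤ s → s ≤ r → (U ξ t s).comp (U ξ s r) = U ξ t r)
    (hUDcompat : ∀ ξ t s f, ι (UD ξ t s f) = U ξ t s (ι f))
    (hUbdd : ∀ ξ, AdmCurve ι M T ξ → ∀ t s, 0 ≤ t → t ≤ s → s ≤ T → ‖U ξ t s‖ ≤ c₃)
    (hUDbdd : ∀ ξ, AdmCurve ι M T ξ → ∀ t s, 0 ≤ t → t ≤ s → s ≤ T → ‖UD ξ t s‖ ≤ c₂)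
    (hUcont : ∀ ξ, AdmCurve ι M T ξ → ∀ v : B,
      ContinuousOn (fun q : ℝ × ℝ => U ξ q.1 q.2 v)
        {q : ℝ × ℝ | 0 ≤ q.1 ∧ q.1 ≤ q.2 ∧ q.2 ≤ T})
    (hgen₁ : ∀ ξ, AdmCurve ι M T ξ → ∀ (f : D) (t : ℝ), t ∈ Icc (0:ℝ) T →
      ∀ s ∈ Icc t T,
      HasDerivWithinAt (fun r => U ξ t r (ι f)) (U ξ t s (A ξ s f)) (Icc t T) s)
    (hgen₂ : ∀ ξ, AdmCurve ι M T ξ → ∀ (f : D) (r : ℝ), r ∈ Icc (0:ℝ) T →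
      ∀ s ∈ Icc (0:ℝ) r,
      HasDerivWithinAt (fun q => U ξ q r (ι f)) (-(A ξ s (UD ξ s r f)))
        (Icc (0:ℝ) r) s)
    (hpres : ∀ ξ, AdmCurve ι M T ξ → ∀ t s, 0 ≤ t → t ≤ s → s ≤ T →
      ∀ ν ∈ M, ν.comp (U ξ t s) ∈ M)
 :
    ∀ η, η ∈ M → ∀ ξc ηc, AdmCurve ι M T ξc → AdmCurve ι M T ηc →
    ξc 0 = μ → ηc 0 = η →
    (∀ t ∈ Icc (0:ℝ) T, ξc t = μ.comp (U ξc 0 t)) →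
    (∀ t ∈ Icc (0:ℝ) T, ηc t = η.comp (U ηc 0 t)) →
    (⨆ t : Icc (0:ℝ) T, ‖embDual ι (ξc (t:ℝ)) - embDual ι (ηc (t:ℝ))‖) ≤
      c₁ * c₂ * c₃ * T * K *
        (⨆ t : Icc (0:ℝ) T, ‖embDual ι (ξc (t:ℝ)) - embDual ι (ηc (t:ℝ))‖) +
      c₂ * ‖embDual ι (μ - η)‖ :=
  stmt19_general ι T K c₁ c₂ c₃ hT hc₁ hc₂ hc₃ M hMbdd μ hμ A U UD hAlip hUid hUDcompat hUbdd hUDbdd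
    hUcont hgen₁ hgen₂
end
end
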